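/- arXiv:2201.04738 — 2 statements merged into one kernel-verified Lean document; each statement's English description precedes it below -/
import Mathlib

section
/- Let G ∈ ℝ^{n×n} be symmetric positive semidefinite with orthonormal eigenvectors u₁,…,u_n (with respect to an inner product ⟨·,·⟩) and eigenvalues λ₁ ≥ … ≥ λ_n ≥ 0. Let t ↦ G_t be continuous and let r solve r'(t) = -G_t r(t), with the additional property that t ↦ ‖r(t)‖ is nonincreasing. Let P_k be the orthogonal projection onto span{u₁,…,u_k}. If λ_k > 0, then ‖P_k(r(t) - exp(-G t) r(0))‖ ≤ ((1 - exp(-λ_k t))/λ_k) · sup_{s ∈ [0,t]} ‖G - G_s‖_op · ‖r(0)‖. -/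
/-!
Duhamel's formula writes `r t - exp (-t G) r 0` as `∫₀ᵗ exp (-(t - s) G) ((G - G_s) (r s)) ds`.
Projected onto the span of the top `k` eigenvectors, `exp (-τ G)` acts diagonally with factors
`exp (-τ λᵢ) ≤ exp (-τ λ_k)`, so it contracts by `exp (-λ_k τ)`. Since `‖r s‖ ≤ ‖r 0‖`, the
projected integrand is bounded by `exp (-λ_k (t - s)) * sup ‖G - G_s‖ * ‖r 0‖`, which integrates
to the claimed bound.
-/

open Set
open scoped RealInnerProductSpace

theorem integral_exp_neg_mul_sub {c : ℝ} (hc : c ≠ 0) (t : ℝ) :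
    ∫ s in (0:ℝ)..t, Real.exp (-c * (t - s)) = (1 - Real.exp (-c * t)) / c := by
  have hderiv : ∀ s ∈ uIcc 0 t, HasDerivAt (fun s => Real.exp (-c * (t - s)) / c)
      (Real.exp (-c * (t - s))) s := by
    intro s _
    have := ((((hasDerivAt_id' s).const_sub t).const_mul (-c)).exp).div_const c
    simpa [hc] using this
  have hint : IntervalIntegrable (fun s => Real.exp (-c * (t - s))) MeasureTheory.volume 0 t :=
    Continuous.intervalIntegrable (by fun_prop) 0 t
  rw [intervalIntegral.integral_eq_sub_of_hasDerivAt hderiv hint]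
  simp [sub_div]

theorem Orthonormal.norm_sum_smul_inner_le {E ι : Type*} [NormedAddCommGroup E]
    [InnerProductSpace ℝ E] [Fintype ι] {v : ι → E} (hv : Orthonormal ℝ v) {w : ι → ℝ} {C : ℝ}
    (hC : 0 ≤ C) (hw : ∀ i, |w i| ≤ C) (x : E) :
    ‖∑ i, (w i * ⟪v i, x⟫) • v i‖ ≤ C * ‖x‖ := by
  have hnorm : ‖∑ i, (w i * ⟪v i, x⟫) • v i‖ ^ 2 = ∑ i, (w i * ⟪v i, x⟫) ^ 2 := by
    rw [← real_inner_self_eq_norm_sq, hv.inner_sum]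
    simp only [sq, RCLike.conj_to_real]
  have hbessel : ∑ i, ⟪v i, x⟫ ^ 2 ≤ ‖x‖ ^ 2 := by
    simpa [Real.norm_eq_abs, sq_abs] using hv.sum_inner_products_le (s := Finset.univ) x
  refine (pow_le_pow_iff_left₀ (norm_nonneg _) (by positivity) two_ne_zero).mp ?_
  calc ‖∑ i, (w i * ⟪v i, x⟫) • v i‖ ^ 2 = ∑ i, w i ^ 2 * ⟪v i, x⟫ ^ 2 := by
        simp only [hnorm, mul_pow]
    _ ≤ ∑ i, C ^ 2 * ⟪v i, x⟫ ^ 2 := by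
        refine Finset.sum_le_sum fun i _ => mul_le_mul_of_nonneg_right ?_ (sq_nonneg _)
        exact sq_le_sq' (abs_le.mp (hw i)).1 (abs_le.mp (hw i)).2
    _ ≤ (C * ‖x‖) ^ 2 := by
        rw [← Finset.mul_sum, mul_pow]
        gcongr

theorem NormedSpace.exp_apply_of_eq_smul {E : Type*} [NormedAddCommGroup E] [NormedSpace ℝ E]
    [CompleteSpace E] {A : E →L[ℝ] E} {x : E} {c : ℝ} (h : A x = c • x) :
    NormedSpace.exp A x = Real.exp c • x := by
  have hpow : ∀ m : ℕ, (A ^ m) x = c ^ m • x := by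
    intro m
    induction m with
    | zero => simp
    | succ m ih =>
      rw [pow_succ, mul_apply_eq_comp, h, map_smul, ih, smul_smul, ← pow_succ']
  have hA := (NormedSpace.exp_series_hasSum_exp' (𝕂 := ℝ) A).mapL (.apply ℝ E x)
  have hc := (NormedSpace.exp_series_hasSum_exp' (𝕂 := ℝ) c).smul_const x
  simp only [ContinuousLinearMap.apply_apply, smul_apply, hpow, smul_smul] at hA
  rw [Real.exp_eq_exp_ℝ]
  exact hA.unique (by simpa only [smul_eq_mul] using hc)

theorem Orthonormal.starProjection_span_apply {𝕜 E ι : Type*} [RCLike 𝕜] [NormedAddCommGroup E]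
    [InnerProductSpace 𝕜 E] [Fintype ι] {v : ι → E} (hv : Orthonormal 𝕜 v)
    [(Submodule.span 𝕜 (range v)).HasOrthogonalProjection] (x : E) :
    (Submodule.span 𝕜 (range v)).starProjection x = ∑ i, inner 𝕜 (v i) x • v i := by
  let b := Module.Basis.span hv.linearIndependent
  have hb : Orthonormal 𝕜 b := by
    simpa [b, Module.Basis.span_apply, Orthonormal, Submodule.coe_inner] using hv
  rw [Submodule.starProjection_apply,
    (b.toOrthonormalBasis hb).orthogonalProjectionOnto_apply_eq_sum]
  simp [b, Module.Basis.span_apply]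

theorem norm_starProjection_exp_neg_smul_apply_le {E ι : Type*} [NormedAddCommGroup E]
    [InnerProductSpace ℝ E] [CompleteSpace E] [Fintype ι] {A : E →L[ℝ] E} (hA : IsSelfAdjoint A)
    {v : ι → E} (hv : Orthonormal ℝ v) {lam : ι → ℝ} (heig : ∀ i, A (v i) = lam i • v i)
    {μ : ℝ} (hμ : ∀ i, μ ≤ lam i) {τ : ℝ} (hτ : 0 ≤ τ)
    [(Submodule.span ℝ (range v)).HasOrthogonalProjection] (x : E) :
    ‖(Submodule.span ℝ (range v)).starProjection (NormedSpace.exp (-(τ • A)) x)‖ ≤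
      Real.exp (-μ * τ) * ‖x‖ := by
  have hexp : ∀ i, NormedSpace.exp (-(τ • A)) (v i) = Real.exp (-τ * lam i) • v i := fun i =>
    NormedSpace.exp_apply_of_eq_smul (by simp [heig, smul_smul])
  have hsymm := (((IsSelfAdjoint.all τ).smul hA).neg.exp).isSymmetric
  have hcoeff : ∀ i, ⟪v i, NormedSpace.exp (-(τ • A)) x⟫ = Real.exp (-τ * lam i) * ⟪v i, x⟫ := by
    intro i
    trans ⟪NormedSpace.exp (-(τ • A)) (v i), x⟫
    · exact (hsymm (v i) x).symm
    · rw [hexp, real_inner_smul_left]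
  rw [hv.starProjection_span_apply]
  simp_rw [hcoeff]
  refine hv.norm_sum_smul_inner_le (by positivity) (fun i => ?_) x
  rw [abs_of_pos (Real.exp_pos _), Real.exp_le_exp]
  nlinarith [hμ i]

theorem IsCompact.le_biSup_of_continuousOn {α β : Type*} [TopologicalSpace α]
    [ConditionallyCompleteLinearOrder β] [TopologicalSpace β] [OrderTopology β] {K : Set α}
    (hK : IsCompact K) {f : α → β} (hf : ContinuousOn f K) {x : α} (hx : x ∈ K) :
    f x ≤ ⨆ y ∈ K, f y :=
  le_ciSup₂ (f := fun y (_ : y ∈ K) => f y)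
    ((hK.image_of_continuousOn hf).bddAbove.mono (by
      rintro _ ⟨_, ⟨y, rfl⟩, ⟨hy, rfl⟩⟩
      exact mem_image_of_mem f hy)) x hx

/-- Duhamel's formula, seen through `L` so that `L` need not be commuted past the integral. -/
theorem map_sub_exp_neg_smul_apply_eq_integral {E F : Type*} [NormedAddCommGroup E]
    [NormedSpace ℝ E] [CompleteSpace E] [NormedAddCommGroup F] [NormedSpace ℝ F] [CompleteSpace F]
    (L : E →L[ℝ] F) (A : E →L[ℝ] E) {B : ℝ → E →L[ℝ] E} {r : ℝ → E} {t : ℝ}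
    (hB : ContinuousOn B (uIcc 0 t)) (hr : ∀ s ∈ uIcc 0 t, HasDerivAt r (-(B s) (r s)) s) :
    L (r t - NormedSpace.exp (-(t • A)) (r 0)) =
      ∫ s in (0:ℝ)..t, L (NormedSpace.exp (-((t - s) • A)) ((A - B s) (r s))) := by
  set F : ℝ → E →L[ℝ] E := fun s => NormedSpace.exp ((s - t) • A) with hF
  have hF_deriv : ∀ s, HasDerivAt F (F s * A) s := fun s =>
    (hasDerivAt_exp_smul_const A (s - t)).comp_sub_const s t
  have hF_neg : ∀ s, NormedSpace.exp (-((t - s) • A)) = F s := fun s => by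
    rw [hF, ← neg_smul, neg_sub]
  simp only [hF_neg]
  have hderiv : ∀ s ∈ uIcc 0 t,
      HasDerivAt (fun s => L (F s (r s))) (L (F s ((A - B s) (r s)))) s := by
    intro s hs
    convert L.hasFDerivAt.comp_hasDerivAt s ((hF_deriv s).clm_apply (hr s hs)) using 1
    · rfl
    · rw [mul_apply_eq_comp, sub_apply, map_sub, map_neg, sub_eq_add_neg]
  have hcont : ContinuousOn (fun s => L (F s ((A - B s) (r s)))) (uIcc 0 t) := by
    have hr_cont : ContinuousOn r (uIcc 0 t) := fun s hs =>
      (hr s hs).continuousAt.continuousWithinAt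
    have hF_cont : Continuous F :=
      continuous_iff_continuousAt.2 fun s => (hF_deriv s).continuousAt
    exact L.continuous.comp_continuousOn
      (hF_cont.continuousOn.clm_apply ((continuousOn_const.sub hB).clm_apply hr_cont))
  rw [intervalIntegral.integral_eq_sub_of_hasDerivAt hderiv hcont.intervalIntegrable]
  simp [hF]

theorem Matrix.continuous_toEuclideanCLM {n : Type*} [Fintype n] [DecidableEq n] :
    Continuous (Matrix.toEuclideanCLM (n := n) (𝕜 := ℝ)) := by
  have := LinearMap.continuous_of_finiteDimensional
    (Matrix.toEuclideanCLM (n := n) (𝕜 := ℝ)).toAlgEquiv.toLinearEquiv.toLinearMap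
  exact this

theorem Matrix.IsSymm.isSelfAdjoint_toEuclideanCLM {n : Type*} [Fintype n] [DecidableEq n]
    {G : Matrix n n ℝ} (hG : G.IsSymm) : IsSelfAdjoint (Matrix.toEuclideanCLM (𝕜 := ℝ) G) :=
  (Matrix.isHermitian_iff_isSymm.mpr hG).isSelfAdjoint.map _

theorem damped_deviations_projection_bound_general {n : ℕ}
    (G : Matrix (Fin n) (Fin n) ℝ) (hGsym : G.IsSymm)
    (u : Fin n → EuclideanSpace ℝ (Fin n)) (hu : Orthonormal ℝ u)
    (lam : Fin n → ℝ) (hmono : Antitone lam)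
    (heig : ∀ i, Matrix.toEuclideanCLM (𝕜 := ℝ) G (u i) = lam i • u i)
    (Gt : ℝ → Matrix (Fin n) (Fin n) ℝ) (hGt : Continuous Gt)
    (r : ℝ → EuclideanSpace ℝ (Fin n))
    (hr : ∀ t : ℝ, 0 ≤ t →
      HasDerivAt r (-(Matrix.toEuclideanCLM (𝕜 := ℝ) (Gt t)) (r t)) t)
    (hrmono : AntitoneOn (fun t => ‖r t‖) (Set.Ici (0:ℝ)))
    (k : Fin n) (hk : 0 < lam k)
    (K : Submodule ℝ (EuclideanSpace ℝ (Fin n)))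
    (hK : K = Submodule.span ℝ (Set.range fun i : {i : Fin n // i ≤ k} => u i))
    (t : ℝ) (ht : 0 ≤ t) :
    ‖(K.subtypeL ∘L K.orthogonalProjectionOnto)
        (r t - NormedSpace.exp (-(t • Matrix.toEuclideanCLM (𝕜 := ℝ) G)) (r 0))‖ ≤
      ((1 - Real.exp (-(lam k) * t)) / lam k) *
        (⨆ s ∈ Set.Icc (0:ℝ) t, ‖Matrix.toEuclideanCLM (𝕜 := ℝ) (G - Gt s)‖) * ‖r 0‖ := by
  set A := Matrix.toEuclideanCLM (𝕜 := ℝ) G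
  set B := fun s => Matrix.toEuclideanCLM (𝕜 := ℝ) (Gt s)
  set M := ⨆ s ∈ Set.Icc (0:ℝ) t, ‖Matrix.toEuclideanCLM (𝕜 := ℝ) (G - Gt s)‖
  have hAB : ∀ s, A - B s = Matrix.toEuclideanCLM (𝕜 := ℝ) (G - Gt s) := fun s =>
    (map_sub _ _ _).symm
  have hM : ∀ s ∈ Icc 0 t, ‖A - B s‖ ≤ M := fun s hs => by
    rw [hAB]
    exact isCompact_Icc.le_biSup_of_continuousOn
      (Matrix.continuous_toEuclideanCLM.comp (continuous_const.sub hGt)).norm.continuousOn hs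
  have hr_le : ∀ s ∈ Icc 0 t, ‖r s‖ ≤ ‖r 0‖ := fun s hs => hrmono Set.self_mem_Ici hs.1 hs.1
  have hA : IsSelfAdjoint A := hGsym.isSelfAdjoint_toEuclideanCLM
  have hbound : ∀ s ∈ Icc 0 t, ‖K.starProjection
      (NormedSpace.exp (-((t - s) • A)) ((A - B s) (r s)))‖ ≤
        Real.exp (-lam k * (t - s)) * (M * ‖r 0‖) := fun s hs => by
    subst hK
    have hv : Orthonormal ℝ (fun i : {i : Fin n // i ≤ k} => u i) :=
      hu.comp _ Subtype.val_injective
    calc _ ≤ Real.exp (-lam k * (t - s)) * ‖(A - B s) (r s)‖ :=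
          norm_starProjection_exp_neg_smul_apply_le hA hv (lam := fun i => lam i)
            (fun i => heig i) (fun i => hmono i.2) (sub_nonneg.2 hs.2) _
      _ ≤ Real.exp (-lam k * (t - s)) * (M * ‖r 0‖) := by
          gcongr
          exact (A - B s).le_of_opNorm_le_of_le (hM s hs) (hr_le s hs)
  have hduhamel := map_sub_exp_neg_smul_apply_eq_integral K.starProjection A (B := B)
    ((Matrix.continuous_toEuclideanCLM.comp hGt).continuousOn)
    (fun s hs => hr s (by rw [uIcc_of_le ht] at hs; exact hs.1))
  change ‖K.starProjection _‖ ≤ _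
  calc _ = ‖∫ s in (0:ℝ)..t, K.starProjection
          (NormedSpace.exp (-((t - s) • A)) ((A - B s) (r s)))‖ := by rw [hduhamel]
    _ ≤ ∫ s in (0:ℝ)..t, Real.exp (-lam k * (t - s)) * (M * ‖r 0‖) :=
        intervalIntegral.norm_integral_le_of_norm_le ht
          (Filter.Eventually.of_forall fun s hs => hbound s (Ioc_subset_Icc_self hs))
          (by apply Continuous.intervalIntegrable; fun_prop)
    _ = (1 - Real.exp (-lam k * t)) / lam k * M * ‖r 0‖ := by
        rw [intervalIntegral.integral_mul_const, integral_exp_neg_mul_sub hk.ne', mul_assoc]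

/-- Projection of the deviation of the residual from the exact NTK-regime dynamics onto the
top-`k` eigendirections of `G` is controlled by `(1 - e^{-λ_k t})/λ_k` times the sup of the
operator-norm deviations `‖G - G_s‖` and `‖r 0‖`. -/
theorem damped_deviations_projection_bound {n : ℕ}
    (G : Matrix (Fin n) (Fin n) ℝ) (hGsym : G.IsSymm) (hGpsd : G.PosSemidef)
    (u : Fin n → EuclideanSpace ℝ (Fin n)) (hu : Orthonormal ℝ u)
    (lam : Fin n → ℝ) (hmono : Antitone lam) (hnonneg : ∀ i, 0 ≤ lam i)
    (heig : ∀ i, Matrix.toEuclideanCLM (𝕜 := ℝ) G (u i) = lam i • u i)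
    (Gt : ℝ → Matrix (Fin n) (Fin n) ℝ) (hGt : Continuous Gt)
    (r : ℝ → EuclideanSpace ℝ (Fin n))
    (hr : ∀ t : ℝ, 0 ≤ t →
      HasDerivAt r (-(Matrix.toEuclideanCLM (𝕜 := ℝ) (Gt t)) (r t)) t)
    (hrmono : AntitoneOn (fun t => ‖r t‖) (Set.Ici (0:ℝ)))
    (k : Fin n) (hk : 0 < lam k)
    (K : Submodule ℝ (EuclideanSpace ℝ (Fin n)))
    (hK : K = Submodule.span ℝ (Set.range fun i : {i : Fin n // i ≤ k} => u i))
    (t : ℝ) (ht : 0 ≤ t) :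
    ‖(K.subtypeL ∘L K.orthogonalProjectionOnto)
        (r t - NormedSpace.exp (-(t • Matrix.toEuclideanCLM (𝕜 := ℝ) G)) (r 0))‖ ≤
      ((1 - Real.exp (-(lam k) * t)) / lam k) *
        (⨆ s ∈ Set.Icc (0:ℝ) t, ‖Matrix.toEuclideanCLM (𝕜 := ℝ) (G - Gt s)‖) * ‖r 0‖ :=
  damped_deviations_projection_bound_general G hGsym u hu lam hmono heig Gt hGt r hr hrmono k hk K
    hK t ht
end

section
/- Let X ⊆ ℝ^d with ‖x‖₂ ≤ M for all x ∈ X, and let σ : ℝ → ℝ be differentiable with ‖σ'‖_∞ < ∞. For parameters (a, W, b, b₀) with a, b ∈ ℝ^m, W ∈ ℝ^{m×d}, b₀ ∈ ℝ, define f(x) = (1/√m) aᵀ σ(Wx + b) + b₀ (σ applied entrywise). If ‖a - ã‖₂ ≤ ε/(4γ'), ‖W - W̃‖_F ≤ ε/(8 M ‖σ'‖_∞ ρ₁'), ‖b - b̃‖₂ ≤ ε/(8 ‖σ'‖_∞ ρ₁'), |b₀ - b̃₀| ≤ ε/2, where (1/√m)‖a‖₂ ≤ ρ₁', (1/√m)‖W̃‖_op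 ≤ ρ₂', (1/√m)‖b̃‖₂ ≤ ρ₃', and γ' := |σ(0)| + ‖σ'‖_∞(ρ₂' M + ρ₃'), then sup_{x ∈ X} |f(x; a, W, b, b₀) - f(x; ã, W̃, b̃, b̃₀)| ≤ ε. -/
/-- Euclidean norm of a finite real vector. -/
noncomputable def en {k : ℕ} (v : Fin k → ℝ) : ℝ :=
  ‖(WithLp.equiv 2 (Fin k → ℝ)).symm v‖

/-- Operator norm of a matrix induced by the Euclidean norms. -/
noncomputable def l2opNorm {m d : ℕ} (W : Matrix (Fin m) (Fin d) ℝ) : ℝ :=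
  ‖LinearMap.toContinuousLinearMap (Matrix.toEuclideanLin W)‖

/-- Frobenius norm of a matrix. -/
noncomputable def frobNorm {m d : ℕ} (W : Matrix (Fin m) (Fin d) ℝ) : ℝ :=
  Real.sqrt (∑ i, ∑ j, (W i j) ^ 2)

/-!
Split the difference of the two networks as
`(1/√m) Σ aₗ (σ(uₗ) - σ(ũₗ)) + (1/√m) Σ (aₗ - ãₗ) σ(ũₗ) + (b₀ - b̃₀)` with `u = Wx + b`,
`ũ = W̃x + b̃`, and bound each part by Cauchy–Schwarz. For the first, `σ` is `‖σ'‖_∞`-Lipschitz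
and `‖u - ũ‖ ≤ ‖W - W̃‖_F ‖x‖ + ‖b - b̃‖`; for the second, `|σ(t)| ≤ |σ(0)| + ‖σ'‖_∞ |t|` gives
`(1/√m) ‖σ(ũ)‖ ≤ γ'`. The three parts are then at most `ε/4`, `ε/4` and `ε/2`.
-/

open Matrix NNReal

section EuclideanNorm

variable {k : ℕ}

lemma en_eq_sqrt (v : Fin k → ℝ) : en v = √(∑ i, v i ^ 2) := by
  simp [en, EuclideanSpace.norm_eq]

lemma en_nonneg (v : Fin k → ℝ) : 0 ≤ en v := norm_nonneg _

lemma en_add_le (v w : Fin k → ℝ) : en (v + w) ≤ en v + en w := norm_add_le _ _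

lemma en_smul (c : ℝ) (v : Fin k → ℝ) : en (c • v) = |c| * en v := by
  simp [en, norm_smul]

lemma en_const (c : ℝ) : en (fun _ : Fin k => c) = √k * |c| := by
  simp [en_eq_sqrt, Real.sqrt_mul, Real.sqrt_sq_eq_abs]

lemma en_le_en_of_abs_le {v w : Fin k → ℝ} (h : ∀ i, |v i| ≤ |w i|) : en v ≤ en w := by
  rw [en_eq_sqrt, en_eq_sqrt]
  exact Real.sqrt_le_sqrt (Finset.sum_le_sum fun i _ => sq_le_sq.mpr (h i))

lemma abs_sum_mul_le_en_mul_en (v w : Fin k → ℝ) : |∑ i, v i * w i| ≤ en v * en w := by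
  simpa [en, PiLp.inner_apply, mul_comm] using
    abs_real_inner_le_norm (WithLp.toLp 2 v) (WithLp.toLp 2 w)

variable {σ : ℝ → ℝ} {K : ℝ≥0}

lemma en_comp_sub_comp_le (hσ : LipschitzWith K σ) (u v : Fin k → ℝ) :
    en (σ ∘ u - σ ∘ v) ≤ K * en (u - v) := by
  rw [← abs_of_nonneg K.coe_nonneg, ← en_smul]
  refine en_le_en_of_abs_le fun i => ?_
  simpa [abs_mul, ← Real.dist_eq] using hσ.dist_le_mul (u i) (v i)

lemma inv_sqrt_mul_en_comp_le (hσ : LipschitzWith K σ) (u : Fin k → ℝ) :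
    1 / √k * en (σ ∘ u) ≤ |σ 0| + K * (1 / √k * en u) := by
  have hsplit : σ ∘ u = (σ ∘ u - σ ∘ (0 : Fin k → ℝ)) + fun _ => σ 0 := by ext; simp
  have hbound : en (σ ∘ u) ≤ √k * |σ 0| + K * en u := by
    rw [hsplit, add_comm (√k * _), ← en_const]
    refine (en_add_le _ _).trans (add_le_add ?_ le_rfl)
    simpa using en_comp_sub_comp_le hσ u 0
  have hscale : 1 / √k * √k ≤ 1 := by rw [one_div]; exact inv_mul_le_one
  calc 1 / √k * en (σ ∘ u) ≤ 1 / √k * (√k * |σ 0| + K * en u) := by gcongr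
    _ = (1 / √k * √k) * |σ 0| + K * (1 / √k * en u) := by ring
    _ ≤ |σ 0| + K * (1 / √k * en u) := by
        gcongr; exact mul_le_of_le_one_left (abs_nonneg _) hscale

end EuclideanNorm

section MatrixNorms

variable {m d : ℕ}

lemma l2opNorm_nonneg (W : Matrix (Fin m) (Fin d) ℝ) : 0 ≤ l2opNorm W := norm_nonneg _

lemma frobNorm_nonneg (W : Matrix (Fin m) (Fin d) ℝ) : 0 ≤ frobNorm W := Real.sqrt_nonneg _

lemma en_mulVec_le_l2opNorm_mul (W : Matrix (Fin m) (Fin d) ℝ) (x : Fin d → ℝ) :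
    en (W *ᵥ x) ≤ l2opNorm W * en x := by
  simpa [en, l2opNorm, Matrix.toLpLin_toLp] using
    (LinearMap.toContinuousLinearMap (Matrix.toEuclideanLin W)).le_opNorm (WithLp.toLp 2 x)

lemma en_mulVec_le_frobNorm_mul (W : Matrix (Fin m) (Fin d) ℝ) (x : Fin d → ℝ) :
    en (W *ᵥ x) ≤ frobNorm W * en x := by
  rw [en_eq_sqrt, en_eq_sqrt, frobNorm, ← Real.sqrt_mul (by positivity), Finset.sum_mul]
  gcongr with i
  exact Finset.sum_mul_sq_le_sq_mul_sq Finset.univ (W i) x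

lemma en_mulVec_add_le (W : Matrix (Fin m) (Fin d) ℝ) (x : Fin d → ℝ) (b : Fin m → ℝ) :
    en (W *ᵥ x + b) ≤ l2opNorm W * en x + en b :=
  (en_add_le _ _).trans (add_le_add (en_mulVec_le_l2opNorm_mul W x) le_rfl)

lemma en_mulVec_add_sub_le (W W₂ : Matrix (Fin m) (Fin d) ℝ) (x : Fin d → ℝ) (b b₂ : Fin m → ℝ) :
    en ((W *ᵥ x + b) - (W₂ *ᵥ x + b₂)) ≤ frobNorm (W - W₂) * en x + en (b - b₂) := by
  have hdiff : (W *ᵥ x + b) - (W₂ *ᵥ x + b₂) = (W - W₂) *ᵥ x + (b - b₂) := by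
    rw [sub_mulVec]; abel
  rw [hdiff]
  exact (en_add_le _ _).trans (add_le_add (en_mulVec_le_frobNorm_mul _ x) le_rfl)

end MatrixNorms

lemma lipschitzWith_of_abs_deriv_le {σ : ℝ → ℝ} (hσ : Differentiable ℝ σ) {K : ℝ≥0}
    (h : ∀ z, |deriv σ z| ≤ K) : LipschitzWith K σ :=
  lipschitzWith_of_nnnorm_deriv_le hσ fun z => by
    rw [← NNReal.coe_le_coe, coe_nnnorm, Real.norm_eq_abs]
    exact h z

lemma sum_mul_sub_sum_mul {ι : Type*} (s : Finset ι) (a a₂ y y₂ : ι → ℝ) :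
    ∑ i ∈ s, a i * y i - ∑ i ∈ s, a₂ i * y₂ i =
      ∑ i ∈ s, a i * (y i - y₂ i) + ∑ i ∈ s, (a i - a₂ i) * y₂ i := by
  rw [← Finset.sum_sub_distrib, ← Finset.sum_add_distrib]
  exact Finset.sum_congr rfl fun i _ => by ring

/-- Also true for `c = 0`, where `y / c = 0`. -/
lemma mul_le_of_le_div_of_nonneg {c x y : ℝ} (hc : 0 ≤ c) (hy : 0 ≤ y) (h : x ≤ y / c) :
    c * x ≤ y := by
  rcases hc.eq_or_lt with rfl | hc
  · simpa using hy
  · exact (le_div_iff₀' hc).mp h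

noncomputable def shallowNet {m d : ℕ} (σ : ℝ → ℝ) (a : Fin m → ℝ) (W : Matrix (Fin m) (Fin d) ℝ)
    (b : Fin m → ℝ) (b₀ : ℝ) (x : Fin d → ℝ) : ℝ :=
  (1 / Real.sqrt m) * ∑ ℓ, a ℓ * σ (W.mulVec x ℓ + b ℓ) + b₀

lemma abs_shallowNet_sub_le {m d : ℕ} {σ : ℝ → ℝ} {K : ℝ≥0} (hσ : LipschitzWith K σ)
    (a a₂ b b₂ : Fin m → ℝ) (W W₂ : Matrix (Fin m) (Fin d) ℝ) (b₀ c₀ : ℝ) (x : Fin d → ℝ) :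
    |shallowNet σ a W b b₀ x - shallowNet σ a₂ W₂ b₂ c₀ x| ≤
      1 / √m * en a * (K * (frobNorm (W - W₂) * en x + en (b - b₂))) +
        en (a - a₂) * (|σ 0| + K * (1 / √m * l2opNorm W₂ * en x + 1 / √m * en b₂)) +
          |b₀ - c₀| := by
  set s := 1 / √(m : ℝ)
  set u := W *ᵥ x + b
  set u₂ := W₂ *ᵥ x + b₂
  have hs : 0 ≤ s := by positivity
  have hsplit : shallowNet σ a W b b₀ x - shallowNet σ a₂ W₂ b₂ c₀ x =
      s * ∑ ℓ, a ℓ * (σ (u ℓ) - σ (u₂ ℓ)) + s * ∑ ℓ, (a ℓ - a₂ ℓ) * σ (u₂ ℓ) + (b₀ - c₀) := by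
    simp only [shallowNet, s, u, u₂, Pi.add_apply]
    linear_combination (1 / √(m : ℝ)) * sum_mul_sub_sum_mul Finset.univ a a₂
      (fun ℓ => σ ((W *ᵥ x) ℓ + b ℓ)) (fun ℓ => σ ((W₂ *ᵥ x) ℓ + b₂ ℓ))
  have hhidden : s * |∑ ℓ, a ℓ * (σ (u ℓ) - σ (u₂ ℓ))| ≤
      s * en a * (K * (frobNorm (W - W₂) * en x + en (b - b₂))) := by
    rw [mul_assoc]
    gcongr
    calc _ ≤ en a * en (σ ∘ u - σ ∘ u₂) := abs_sum_mul_le_en_mul_en a (σ ∘ u - σ ∘ u₂)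
      _ ≤ en a * (K * en (u - u₂)) := by
          gcongr; exacts [en_nonneg a, en_comp_sub_comp_le hσ u u₂]
      _ ≤ _ := by gcongr; exacts [en_nonneg a, en_mulVec_add_sub_le W W₂ x b b₂]
  have houter : s * |∑ ℓ, (a ℓ - a₂ ℓ) * σ (u₂ ℓ)| ≤
      en (a - a₂) * (|σ 0| + K * (s * l2opNorm W₂ * en x + s * en b₂)) :=
    calc _ ≤ en (a - a₂) * (s * en (σ ∘ u₂)) := by
          rw [mul_left_comm]; gcongr; exact abs_sum_mul_le_en_mul_en (a - a₂) (σ ∘ u₂)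
      _ ≤ en (a - a₂) * (|σ 0| + K * (s * en u₂)) := by
          gcongr; exacts [en_nonneg _, inv_sqrt_mul_en_comp_le hσ u₂]
      _ ≤ _ := by
          rw [mul_assoc, ← mul_add]; gcongr; exacts [en_nonneg _, en_mulVec_add_le W₂ x b₂]
  calc _ = |s * ∑ ℓ, a ℓ * (σ (u ℓ) - σ (u₂ ℓ)) + s * ∑ ℓ, (a ℓ - a₂ ℓ) * σ (u₂ ℓ)
        + (b₀ - c₀)| := by rw [hsplit]
    _ ≤ s * |∑ ℓ, a ℓ * (σ (u ℓ) - σ (u₂ ℓ))| + s * |∑ ℓ, (a ℓ - a₂ ℓ) * σ (u₂ ℓ)|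
        + |b₀ - c₀| := by
          grw [abs_add_le, abs_add_le, abs_mul, abs_mul, abs_of_nonneg hs]
    _ ≤ _ := by grw [hhidden, houter]

/-- Perturbation bound for shallow networks `f(x) = (1/√m) aᵀ σ(Wx + b) + b₀`: if the
parameters of two networks are close (relative to the stated scales), then the networks are
uniformly `ε`-close on the ball of radius `M`.  This is the quantitative core of the
covering-number estimate for the class of bounded-parameter shallow networks. -/
theorem shallow_network_perturbation_bound {m d : ℕ}
    (σ : ℝ → ℝ) (hσ : Differentiable ℝ σ) (Sd : ℝ) (hSd : ∀ z, |deriv σ z| ≤ Sd)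
    (M : ℝ) (hM : 0 < M)
    (a a₂ b b₂ : Fin m → ℝ) (W W₂ : Matrix (Fin m) (Fin d) ℝ) (b₀ c₀ : ℝ)
    (ρ₁' ρ₂' ρ₃' ε : ℝ) (hε : 0 < ε) (hρ₁' : 0 < ρ₁')
    (γ' : ℝ) (hγ' : γ' = |σ 0| + Sd * (ρ₂' * M + ρ₃'))
    (ha' : (1 / Real.sqrt m) * en a ≤ ρ₁')
    (hW' : (1 / Real.sqrt m) * l2opNorm W₂ ≤ ρ₂')
    (hb' : (1 / Real.sqrt m) * en b₂ ≤ ρ₃')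
    (ha : en (a - a₂) ≤ ε / (4 * γ'))
    (hW : frobNorm (W - W₂) ≤ ε / (8 * M * Sd * ρ₁'))
    (hb : en (b - b₂) ≤ ε / (8 * Sd * ρ₁'))
    (hb₀ : |b₀ - c₀| ≤ ε / 2) :
    ∀ x : Fin d → ℝ, en x ≤ M →
      |((1 / Real.sqrt m) * ∑ ℓ, a ℓ * σ (W.mulVec x ℓ + b ℓ) + b₀) -
        ((1 / Real.sqrt m) * ∑ ℓ, a₂ ℓ * σ (W₂.mulVec x ℓ + b₂ ℓ) + c₀)| ≤ ε := by
  intro x hx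
  have hSd0 : 0 ≤ Sd := (abs_nonneg _).trans (hSd 0)
  have hK : ((Real.toNNReal Sd : ℝ≥0) : ℝ) = Sd := Real.coe_toNNReal Sd hSd0
  have hLip : LipschitzWith (Real.toNNReal Sd) σ :=
    lipschitzWith_of_abs_deriv_le hσ fun z => by rw [hK]; exact hSd z
  have hρ₂' : 0 ≤ ρ₂' := (mul_nonneg (by positivity) (l2opNorm_nonneg W₂)).trans hW'
  have hρ₃' : 0 ≤ ρ₃' := (mul_nonneg (by positivity) (en_nonneg b₂)).trans hb'
  have hW_M : M * Sd * ρ₁' * frobNorm (W - W₂) ≤ ε / 8 :=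
    mul_le_of_le_div_of_nonneg (by positivity) (by positivity) (by convert hW using 1; ring)
  have hb_M : Sd * ρ₁' * en (b - b₂) ≤ ε / 8 :=
    mul_le_of_le_div_of_nonneg (by positivity) (by positivity) (by convert hb using 1; ring)
  have ha_M : γ' * en (a - a₂) ≤ ε / 4 :=
    mul_le_of_le_div_of_nonneg (by rw [hγ']; positivity) (by positivity)
      (by convert ha using 1; ring)
  have hfrob_nonneg := frobNorm_nonneg (W - W₂)
  have hx_nonneg := en_nonneg x
  have hb_nonneg := en_nonneg (b - b₂)
  have ha_nonneg := en_nonneg (a - a₂)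
  have hhidden : 1 / √m * en a * (Sd * (frobNorm (W - W₂) * en x + en (b - b₂))) ≤ ε / 4 :=
    calc _ ≤ ρ₁' * (Sd * (frobNorm (W - W₂) * M + en (b - b₂))) := by gcongr
      _ = M * Sd * ρ₁' * frobNorm (W - W₂) + Sd * ρ₁' * en (b - b₂) := by ring
      _ ≤ ε / 4 := by linarith
  have houter : en (a - a₂) * (|σ 0| + Sd * (1 / √m * l2opNorm W₂ * en x + 1 / √m * en b₂))
      ≤ ε / 4 :=
    calc _ ≤ en (a - a₂) * γ' := by rw [hγ']; gcongr
      _ ≤ ε / 4 := by linarith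
  have hperturb := abs_shallowNet_sub_le hLip a a₂ b b₂ W W₂ b₀ c₀ x
  rw [hK] at hperturb
  exact hperturb.trans (by linarith)
end
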